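/- arXiv:1910.02819 — 3 statements merged into one kernel-verified Lean document; each statement's English description precedes it below -/
import Mathlib

section
/- Let H be a simple graph with a vertex x whose neighbourhood is exactly {a, b, c, d}, where a, b, c, d are pairwise distinct. Let G be the simple graph obtained from H by deleting the edges xa, xb, xc, xd, adding four new vertices e, f, g, h, and adding the twelve edges xe, xf, xg, xh, ef, fg, gh, he, ae, bf, cg, dh (the 4-cycle addition operation at x). If H admits a 4-locally self-avoiding Eulerian circuit, then so does G. -/
open SimpleGraph

namespace Quartic

variable {V : Type*}

/-- The vertex list `l` (the support of a trail `v_0 v_1 … v_m`) has a subcycle of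
length `t` beginning at index `i`: the entries at positions `i` and `i + t` coincide
and the entries at positions `i, …, i + t - 1` are pairwise distinct.  Only short
lengths `1 ≤ t ≤ 4` are recorded. -/
def ShortSubcycleAt (l : List V) (i t : ℕ) : Prop :=
  1 ≤ t ∧ t ≤ 4 ∧ i + t < l.length ∧
    l[i]? = l[i + t]? ∧
    ∀ p q, i ≤ p → p < q → q < i + t → l[p]? ≠ l[q]?

/-- A trail (given as a walk) is 4-locally self-avoiding if it has no subcycle of
length at most 4. -/
def TrailLSA4 {G : SimpleGraph V} {u v : V} (W : G.Walk u v) : Prop :=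
  ¬ ∃ i t, ShortSubcycleAt W.support i t

/-- Cyclic analogue of `ShortSubcycleAt`, used for circuits: here `l` is the support
of a closed walk with the repeated final vertex removed, and indices are taken modulo
`l.length`, so that subcycles may wrap around the base point. -/
def CyclicShortSubcycleAt (l : List V) (i t : ℕ) : Prop :=
  1 ≤ t ∧ t ≤ 4 ∧ t ≤ l.length ∧
    l[i % l.length]? = l[(i + t) % l.length]? ∧
    ∀ p q, p < q → q < t →
      l[(i + p) % l.length]? ≠ l[(i + q) % l.length]?

/-- A circuit (closed walk) is 4-locally self-avoiding if it has no cyclic subcycle of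
length at most 4. -/
def CircuitLSA4 {G : SimpleGraph V} {u : V} (W : G.Walk u u) : Prop :=
  ¬ ∃ i t, CyclicShortSubcycleAt W.support.dropLast i t

/-- `W` is an Eulerian trail of its graph: a trail traversing every edge exactly once. -/
def IsEulerianTrail {G : SimpleGraph V} {u v : V} (W : G.Walk u v) : Prop :=
  W.IsTrail ∧ ∀ e, e ∈ G.edgeSet ↔ e ∈ W.edges

/-- `G` admits a 4-locally self-avoiding Eulerian circuit. -/
def HasLSA4EulerianCircuit (G : SimpleGraph V) : Prop :=
  ∃ (u : V) (W : G.Walk u u), IsEulerianTrail W ∧ CircuitLSA4 W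

/-- An `L`-path-chain from `u` to `w` in `G`: a sequence of `k` pairwise edge-disjoint
paths covering `E(G)`, the `i`-th of length `ℓ i`, where the first path starts at `u`,
the last path ends at `w`, and consecutive paths share their endpoint. -/
def PathChain (G : SimpleGraph V) (u w : V) {k : ℕ} (ℓ : Fin k → ℕ) : Prop :=
  ∃ (v : Fin (k + 1) → V) (P : ∀ i : Fin k, G.Walk (v i.castSucc) (v i.succ)),
    v 0 = u ∧ v (Fin.last k) = w ∧
    (∀ i, (P i).IsPath) ∧ (∀ i, (P i).length = ℓ i) ∧
    (∀ i j, i ≠ j → ∀ e, e ∈ (P i).edges → e ∉ (P j).edges) ∧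
    (∀ e, e ∈ G.edgeSet → ∃ i, e ∈ (P i).edges)

/-- The graph `F₆` on vertices `x = 0`, `a = 1`, `b = 2`, `c = 3`, `d = 4`, `y = 5`,
with the 11 edges `xa, xb, xc, ya, yc, yd, ab, bc, cd, ad, bd`. -/
def F6 : SimpleGraph (Fin 6) :=
  SimpleGraph.fromEdgeSet
    {s((0 : Fin 6), 1), s((0 : Fin 6), 2), s((0 : Fin 6), 3),
     s((5 : Fin 6), 1), s((5 : Fin 6), 3), s((5 : Fin 6), 4),
     s((1 : Fin 6), 2), s((2 : Fin 6), 3), s((3 : Fin 6), 4),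
     s((1 : Fin 6), 4), s((2 : Fin 6), 4)}

/-- The octahedron `K_{2,2,2}`, with parts `{0,3}`, `{1,4}`, `{2,5}`. -/
def Octahedron : SimpleGraph (Fin 6) :=
  SimpleGraph.fromRel (fun i j => (i : ℕ) % 3 ≠ (j : ℕ) % 3)

/-- The `n`-antiprism, on vertices `u i = (0, i)` and `w i = (1, i)` for `i : ZMod n`,
with edges `u i — u (i+1)`, `w i — w (i+1)`, `u i — w i` and `u (i+1) — w i`. -/
def Antiprism (n : ℕ) : SimpleGraph (Fin 2 × ZMod n) :=
  SimpleGraph.fromRel (fun p q =>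
    (p.1 = q.1 ∧ q.2 = p.2 + 1) ∨
    (p.1 = 0 ∧ q.1 = 1 ∧ (q.2 = p.2 ∨ p.2 = q.2 + 1)))

/-- The graph `G₇` on vertices `x = 0`, `y = 1`, `a = 2`, `b = 3`, `c = 4`, `d = 5`,
`e = 6`, with the 13 edges `xa, xd, xy, yb, ye, ab, ac, ad, bc, be, cd, ce, de`. -/
def G7 : SimpleGraph (Fin 7) :=
  SimpleGraph.fromEdgeSet
    {s((0 : Fin 7), 2), s((0 : Fin 7), 5), s((0 : Fin 7), 1),
     s((1 : Fin 7), 3), s((1 : Fin 7), 6),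
     s((2 : Fin 7), 3), s((2 : Fin 7), 4), s((2 : Fin 7), 5),
     s((3 : Fin 7), 4), s((3 : Fin 7), 6),
     s((4 : Fin 7), 5), s((4 : Fin 7), 6), s((5 : Fin 7), 6)}

/-!
Since `x` has degree 4, an Eulerian circuit of `H` passes through `x` exactly twice; rotated to
start at `x` it reads `x A x B x` with `x ∉ A, B`. In `G`, each of the two passages through `x`
is replaced by a path through `x` and the new 4-cycle, the two paths together using every new
edge once (for each of the three ways of pairing up `a, b, c, d` there is such a pair of paths).
Each path has five inner vertices, all of them new or `x`, so old vertices on its two sides are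
more than 4 apart. A circuit is 4-locally self-avoiding exactly when entries of its vertex
sequence at cyclic distance 1 to 4 differ, and this survives the replacement.
-/

end Quartic

namespace List

variable {α β : Type*}

def Separated (k : ℕ) (l : List α) : Prop :=
  ∀ i j, i < j → j ≤ i + k → j < l.length → l[i]? ≠ l[j]?

namespace Separated

variable {k : ℕ} {l l₁ l₂ m : List α}

theorem of_nodup (h : l.Nodup) : l.Separated k := by
  intro i j hij _ hj
  rw [getElem?_eq_getElem (by omega), getElem?_eq_getElem hj, ne_eq, Option.some_inj,
    h.getElem_inj_iff]
  omega

theorem map {f : α → β} (hf : Function.Injective f) (h : l.Separated k) :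
    (l.map f).Separated k := by
  intro i j hij hjk hj
  simpa [(Option.map_injective hf).ne_iff] using h i j hij hjk (by simpa using hj)

theorem of_infix (hl : l₁ <:+: l) (h : l.Separated k) : l₁.Separated k := by
  obtain ⟨s, t, rfl⟩ := hl
  intro i j hij hjk hj
  have key : ∀ p < l₁.length, (s ++ l₁ ++ t)[s.length + p]? = l₁[p]? := fun p hp => by
    rw [append_assoc, getElem?_append_right (by omega), Nat.add_sub_cancel_left,
      getElem?_append_left hp]
  rw [← key i (by omega), ← key j hj]
  exact h _ _ (by omega) (by omega) (by simp only [length_append]; omega)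

theorem append (h₁ : l₁.Separated k) (h₂ : l₂.Separated k) (h : l₁.Disjoint l₂) :
    (l₁ ++ l₂).Separated k := by
  intro i j hij hjk hj
  rw [length_append] at hj
  by_cases hj₁ : j < l₁.length
  · rw [getElem?_append_left (by omega), getElem?_append_left hj₁]
    exact h₁ i j hij hjk hj₁
  by_cases hi₁ : i < l₁.length
  · rw [getElem?_append_left hi₁, getElem?_append_right (by omega),
      getElem?_eq_getElem hi₁, getElem?_eq_getElem (by omega), ne_eq, Option.some_inj]
    exact fun heq => h (getElem_mem hi₁) (heq ▸ getElem_mem _)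
  · rw [getElem?_append_right (by omega), getElem?_append_right (by omega)]
    exact h₂ _ _ (by omega) (by omega) (by omega)

/-- Two positions at distance at most `k` cannot lie on both sides of a spacer of length `k`. -/
theorem append_append (hm : k ≤ m.length) (h₁ : (l₁ ++ m).Separated k)
    (h₂ : (m ++ l₂).Separated k) : (l₁ ++ m ++ l₂).Separated k := by
  intro i j hij hjk hj
  simp only [length_append] at hj
  by_cases hj₁ : j < l₁.length + m.length
  · have key : ∀ p < l₁.length + m.length, (l₁ ++ m ++ l₂)[p]? = (l₁ ++ m)[p]? :=
      fun p hp => getElem?_append_left (by simpa using hp)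
    rw [key i (by omega), key j hj₁]
    exact h₁ i j hij hjk (by simpa using hj₁)
  · have key : ∀ p ≥ l₁.length, (l₁ ++ m ++ l₂)[p]? = (m ++ l₂)[p - l₁.length]? :=
      fun p hp => by rw [append_assoc, getElem?_append_right hp]
    rw [key i (by omega), key j (by omega)]
    exact h₂ _ _ (by omega) (by omega) (by rw [length_append]; omega)

theorem flatten {l₁ l₂ : List α} {L : List (List α)} (hL : ∀ l ∈ l₂ :: L, k ≤ l.length)
    (hc : (l₁ :: l₂ :: L).IsChain fun l₁ l₂ => (l₁ ++ l₂).Separated k) :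
    (l₁ :: l₂ :: L).flatten.Separated k := by
  induction L generalizing l₁ l₂ with
  | nil => simpa using hc
  | cons l₃ L ih =>
    rw [isChain_cons_cons] at hc
    have := append_append (hL l₂ mem_cons_self) hc.1
      (ih (fun l hl => hL l (mem_cons_of_mem _ hl)) hc.2)
    simpa [append_assoc] using this

theorem le_length {a : α} {s : List α} (h : (a :: (s ++ [a])).Separated k) :
    k ≤ s.length := by
  by_contra hs
  exact h 0 (s.length + 1) (by omega) (by omega) (by simp) (by simp)

theorem append_self_of_isRotated {l' : List α} (h : (l ++ l).Separated k) (hr : l ~r l') :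
    (l' ++ l').Separated k := by
  obtain ⟨r, hrl, rfl⟩ := isRotated_iff_mod.mp hr
  rcases eq_or_ne l [] with rfl | hl
  · simpa using h
  have hk : k < l.length := by
    by_contra hk
    exact h 0 l.length (length_pos_iff.mpr hl) (by omega) (by simp [length_pos_iff.mpr hl])
      (by rw [getElem?_append_right le_rfl, Nat.sub_self, getElem?_append_left
        (length_pos_iff.mpr hl)])
  refine (append_append hk.le h h).of_infix ⟨l.take r, l.drop r, ?_⟩
  rw [rotate_eq_drop_append_take hrl]
  have hl := take_append_drop r l
  generalize take r l = t, drop r l = d at hl ⊢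
  subst hl
  simp

theorem splice {f : α → β} (hf : Function.Injective f) {x : α} {s t : List α}
    {m n : List β} (hs : x ∉ s) (ht : x ∉ t) (hm : m.Nodup) (hn : n.Nodup)
    (hkm : k ≤ m.length) (hkn : k ≤ n.length) (hmf : ∀ y, f y ∈ m → y = x)
    (hnf : ∀ y, f y ∈ n → y = x)
    (h : (s ++ x :: (t ++ [x]) ++ (s ++ x :: (t ++ [x]))).Separated k) :
    (n ++ s.map f ++ m ++ t.map f ++ (n ++ s.map f ++ m ++ t.map f)).Separated k := by
  have hs' : (x :: (s ++ [x])).Separated k := h.of_infix ⟨s ++ x :: t, t ++ [x], by simp⟩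
  have ht' : (x :: (t ++ [x])).Separated k := h.of_infix ⟨s, s ++ x :: (t ++ [x]), by simp⟩
  have joins : ∀ {u : List β} {w : List α}, u.Nodup → (∀ y, f y ∈ u → y = x) → x ∉ w →
      (x :: (w ++ [x])).Separated k →
      (u ++ w.map f).Separated k ∧ (w.map f ++ u).Separated k := by
    intro u w hu huf hw hw'
    have hdisj : u.Disjoint (w.map f) := by
      intro y hyu hyw
      obtain ⟨z, hz, rfl⟩ := mem_map.mp hyw
      exact hw (huf z hyu ▸ hz)
    have hw'' := (hw'.of_infix (infix_cons (infix_append [] w [x]))).map hf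
    exact ⟨(of_nodup hu).append hw'' hdisj, hw''.append (of_nodup hu) hdisj.symm⟩
  obtain ⟨hns, hsn⟩ := joins hn hnf hs hs'
  obtain ⟨hms, hsm⟩ := joins hm hmf hs hs'
  obtain ⟨hmt, htm⟩ := joins hm hmf ht ht'
  obtain ⟨hnt, htn⟩ := joins hn hnf ht ht'
  have hls : k ≤ s.length := hs'.le_length
  have hlt : k ≤ t.length := ht'.le_length
  have := flatten (k := k) (l₁ := n) (l₂ := s.map f) (L := [m, t.map f, n, s.map f, m, t.map f])
    (by simp [hls, hlt, hkm, hkn]) (by simp [isChain_cons_cons, *])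
  simpa using this

end Separated

theorem getElem?_append_self {l : List α} {p : ℕ} (hp : p < 2 * l.length) :
    (l ++ l)[p]? = l[p % l.length]? := by
  by_cases h : p < l.length
  · rw [getElem?_append_left h, Nat.mod_eq_of_lt h]
  · rw [getElem?_append_right (by omega), Nat.mod_eq_sub_mod (by omega),
      Nat.mod_eq_of_lt (by omega)]

end List

namespace SimpleGraph.Walk

variable {V W : Type*} {G : SimpleGraph V} {u v x : V}

theorem two_mul_count_support [DecidableEq V] (p : G.Walk u v) (x : V) :
    2 * p.support.count x
      = p.edges.countP (x ∈ ·) + (if u = x then 1 else 0) + (if v = x then 1 else 0) := by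
  induction p with
  | nil => split_ifs <;> simp_all
  | @cons u w v h p ih =>
    have := h.ne
    grind [support_cons, edges_cons]

theorem IsEulerian.countP_mem_edges_eq_degree [DecidableEq V] [Fintype V] [DecidableRel G.Adj]
    {p : G.Walk u v} (hp : p.IsEulerian) (x : V) :
    p.edges.countP (x ∈ ·) = G.degree x := by
  have h : hp.isTrail.edgesFinset.filter (x ∈ ·) = G.incidenceFinset x := by
    rw [hp.edgesFinset_eq, G.incidenceFinset_eq_filter x]
  rw [← card_incidenceFinset_eq_degree, ← h, Finset.card_def, Finset.filter_val,
    ← Multiset.countP_eq_card_filter]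
  rfl

theorem exists_eq_concat_of_count_support_eq_one [DecidableEq V] (p : G.Walk u x) (hu : u ≠ x)
    (hp : p.support.count x = 1) :
    ∃ (w : V) (A : G.Walk u w) (h : G.Adj w x), x ∉ A.support ∧ p = A.concat h := by
  cases p with
  | nil => exact absurd rfl hu
  | cons h q =>
    obtain ⟨w, A, h', heq⟩ := exists_cons_eq_concat h q
    rw [heq, support_concat, List.count_append, List.count_singleton_self,
      Nat.add_eq_right, List.count_eq_zero] at hp
    exact ⟨w, A, h', hp, heq⟩

theorem exists_eq_cons_concat_append_cons_concat [DecidableEq V] (c : G.Walk x x)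
    (hc : c.edges.countP (x ∈ ·) = 4) :
    ∃ (a₁ b₁ a₂ b₂ : V) (h₁ : G.Adj x a₁) (h₂ : G.Adj b₁ x) (h₃ : G.Adj x a₂) (h₄ : G.Adj b₂ x)
      (A : G.Walk a₁ b₁) (B : G.Walk a₂ b₂), x ∉ A.support ∧ x ∉ B.support ∧
        c = cons h₁ ((A.concat h₂).append (cons h₃ (B.concat h₄))) := by
  have hcount : c.support.count x = 3 := by
    have := c.two_mul_count_support x
    simp only [hc, if_true] at this
    omega
  cases c with
  | nil => simp at hcount
  | cons h₁ R =>
    rw [support_cons, List.count_cons_self] at hcount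
    have hxR : x ∈ R.support := List.count_pos_iff.mp (by omega)
    have hT := R.count_support_takeUntil_eq_one hxR
    have hspec := R.take_spec hxR
    generalize R.takeUntil x hxR = T, R.dropUntil x hxR = D at hT hspec
    subst hspec
    rw [support_append, List.count_append] at hcount
    cases D with
    | nil => simp [hT] at hcount
    | cons h₃ R₂ =>
      rw [support_cons, List.tail_cons] at hcount
      obtain ⟨b₁, A, h₂, hA, rfl⟩ := T.exists_eq_concat_of_count_support_eq_one h₁.ne' hT
      obtain ⟨b₂, B, h₄, hB, rfl⟩ :=
        R₂.exists_eq_concat_of_count_support_eq_one h₃.ne' (by omega)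
      exact ⟨_, _, _, _, h₁, h₂, h₃, h₄, A, B, hA, hB, rfl⟩

theorem exists_map_of_notMem_support {G' : SimpleGraph W} (f : V → W)
    (hf : ∀ v w, G.Adj v w → v ≠ x → w ≠ x → G'.Adj (f v) (f w)) (A : G.Walk u v)
    (hA : x ∉ A.support) :
    ∃ A' : G'.Walk (f u) (f v),
      A'.support = A.support.map f ∧ A'.edges = A.edges.map (Sym2.map f) := by
  induction A with
  | nil => exact ⟨nil, rfl, rfl⟩
  | cons h p ih =>
    rw [support_cons, List.mem_cons, not_or] at hA
    obtain ⟨p', hs, he⟩ := ih hA.2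
    refine ⟨cons (hf _ _ h (Ne.symm hA.1) ?_) p', by simp [hs], by simp [he]⟩
    exact fun h' => hA.2 (h' ▸ p.start_mem_support)

theorem nodup_of_isTrail_cons_concat_append {a₁ b₁ a₂ b₂ : V} {h₁ : G.Adj x a₁} {h₂ : G.Adj b₁ x}
    {h₃ : G.Adj x a₂} {h₄ : G.Adj b₂ x} {A : G.Walk a₁ b₁} {B : G.Walk a₂ b₂}
    (hc : (cons h₁ ((A.concat h₂).append (cons h₃ (B.concat h₄)))).IsTrail) :
    [b₁, a₂, b₂, a₁].Nodup := by
  have := List.Sublist.nodup (l₁ := [s(x, a₁), s(b₁, x), s(x, a₂), s(b₂, x)])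
    (by simp [edges_append, edges_concat]) hc.edges_nodup
  grind [List.nodup_cons, Sym2.eq_iff]

end SimpleGraph.Walk

namespace Quartic

open List

variable {V : Type*}

/-- A closest pair of equal entries at cyclic distance at most `4` bounds a subcycle. -/
theorem exists_cyclicShortSubcycleAt {l : List V} (hl : l ≠ []) {p t : ℕ} (ht₁ : 1 ≤ t)
    (ht₄ : t ≤ 4) (heq : l[p % l.length]? = l[(p + t) % l.length]?) :
    ∃ i t, CyclicShortSubcycleAt l i t := by
  induction t using Nat.strong_induction_on generalizing p with
  | _ t ih =>
  have hn := length_pos_iff.mpr hl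
  by_cases htn : l.length < t
  · refine ih (t - l.length) (by omega) (p := p) (by omega) (by omega) ?_
    rwa [show p + t = p + (t - l.length) + l.length by omega, Nat.add_mod_right] at heq
  by_cases hd : ∀ p' q', p' < q' → q' < t → l[(p + p') % l.length]? ≠ l[(p + q') % l.length]?
  · exact ⟨p, t, ht₁, ht₄, by omega, heq, hd⟩
  push Not at hd
  obtain ⟨p', q', hpq, hqt, heq'⟩ := hd
  exact ih (q' - p') (by omega) (p := p + p') (by omega) (by omega)
    (by rwa [show p + p' + (q' - p') = p + q' by omega])

theorem not_exists_cyclicShortSubcycleAt_iff {l : List V} :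
    (¬∃ i t, CyclicShortSubcycleAt l i t) ↔ (l ++ l).Separated 4 := by
  constructor
  · intro h i j hij hjk hj heq
    obtain ⟨t, rfl⟩ : ∃ t, j = i + t := ⟨j - i, by omega⟩
    rw [length_append, ← two_mul] at hj
    rw [getElem?_append_self (by omega), getElem?_append_self hj] at heq
    exact h (exists_cyclicShortSubcycleAt (by rintro rfl; simp at hj) (by omega) (by omega) heq)
  · rintro h ⟨i, t, ht₁, ht₄, htn, heq, -⟩
    have hi := Nat.mod_lt i (show 0 < l.length by omega)
    apply h (i % l.length) (i % l.length + t) (by omega) (by omega)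
      (by rw [length_append]; omega)
    rwa [getElem?_append_self (by omega), getElem?_append_self (by omega), Nat.mod_mod,
      Nat.mod_add_mod]

theorem circuitLSA4_iff {G : SimpleGraph V} {u : V} (c : G.Walk u u) :
    CircuitLSA4 c ↔ (c.support.tail ++ c.support.tail).Separated 4 := by
  have hrot : c.support.dropLast ~r c.support.tail :=
    IsRotated.dropLast_tail c.support_ne_nil (by simp [Walk.head_support, Walk.getLast_support])
  rw [CircuitLSA4, not_exists_cyclicShortSubcycleAt_iff]
  exact ⟨fun h => h.append_self_of_isRotated hrot, fun h => h.append_self_of_isRotated hrot.symm⟩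

theorem IsEulerianTrail.isEulerian [DecidableEq V] {G : SimpleGraph V} {u v : V} {p : G.Walk u v}
    (hp : IsEulerianTrail p) : p.IsEulerian :=
  (Walk.isEulerian_iff p).mpr ⟨hp.1, fun e he => (hp.2 e).mp he⟩

theorem HasLSA4EulerianCircuit.exists_circuit_at [DecidableEq V] {G : SimpleGraph V}
    (hG : HasLSA4EulerianCircuit G) {x y : V} (hxy : G.Adj x y) :
    ∃ c : G.Walk x x, IsEulerianTrail c ∧ CircuitLSA4 c := by
  obtain ⟨u, c, ⟨htr, hedges⟩, hlsa⟩ := hG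
  have hx : x ∈ c.support := c.fst_mem_support_of_mem_edges ((hedges _).mp hxy)
  refine ⟨c.rotate x hx,
    ⟨htr.rotate hx, fun e => (hedges e).trans (c.rotate_edges x hx).mem_iff.symm⟩, ?_⟩
  rw [circuitLSA4_iff] at hlsa ⊢
  exact hlsa.append_self_of_isRotated (c.support_rotate x hx).symm

section Gadget

variable {ι : Type*} {G : SimpleGraph (V ⊕ ι)}

/-- At least four inner vertices keep the old vertices on the two sides of the route more than
four steps apart. -/
def IsGadgetRoute (x : V) {p q : V} (r : G.Walk (Sum.inl p) (Sum.inl q)) : Prop :=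
  ∃ m : List (V ⊕ ι), r.support = Sum.inl p :: (m ++ [Sum.inl q]) ∧ m.Nodup ∧ 4 ≤ m.length ∧
    ∀ y, Sum.inl y ∈ m → y = x

def IsRoutePair (x : V) {p₁ q₁ p₂ q₂ : V} (r₁ : G.Walk (Sum.inl p₁) (Sum.inl q₁))
    (r₂ : G.Walk (Sum.inl p₂) (Sum.inl q₂)) : Prop :=
  IsGadgetRoute x r₁ ∧ IsGadgetRoute x r₂ ∧ (r₁.edges ++ r₂.edges).Nodup ∧
    ∀ e, e ∈ r₁.edges ++ r₂.edges ↔ e ∈ G.edgeSet ∧ ∃ i, Sum.inr i ∈ e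

variable {x p₁ q₁ p₂ q₂ : V} {r₁ : G.Walk (Sum.inl p₁) (Sum.inl q₁)}
  {r₂ : G.Walk (Sum.inl p₂) (Sum.inl q₂)}

theorem IsGadgetRoute.reverse (h : IsGadgetRoute x r₁) : IsGadgetRoute x r₁.reverse := by
  obtain ⟨m, hm, hnd, hlen, hx⟩ := h
  exact ⟨m.reverse, by simp [hm], List.nodup_reverse.mpr hnd, by simpa using hlen,
    fun y hy => hx y (List.mem_reverse.mp hy)⟩

theorem IsRoutePair.swap (h : IsRoutePair x r₁ r₂) : IsRoutePair x r₂ r₁ := by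
  obtain ⟨h₁, h₂, hnd, hedges⟩ := h
  have hperm := List.perm_append_comm (l₁ := r₁.edges) (l₂ := r₂.edges)
  exact ⟨h₂, h₁, hperm.nodup_iff.mp hnd, fun e => hperm.mem_iff.symm.trans (hedges e)⟩

theorem IsRoutePair.reverse_left (h : IsRoutePair x r₁ r₂) : IsRoutePair x r₁.reverse r₂ := by
  obtain ⟨h₁, h₂, hnd, hedges⟩ := h
  have hperm : (r₁.reverse.edges ++ r₂.edges).Perm (r₁.edges ++ r₂.edges) := by
    simpa using (List.reverse_perm r₁.edges).append_right r₂.edges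
  exact ⟨h₁.reverse, h₂, hperm.nodup_iff.mpr hnd, fun e => hperm.mem_iff.trans (hedges e)⟩

theorem IsRoutePair.reverse_right (h : IsRoutePair x r₁ r₂) : IsRoutePair x r₁ r₂.reverse :=
  h.swap.reverse_left.swap

end Gadget

section Splice

open Walk

variable {ι : Type*} {H : SimpleGraph V} {G : SimpleGraph (V ⊕ ι)} {x a₁ b₁ a₂ b₂ : V}
  {h₁ : H.Adj x a₁} {h₂ : H.Adj b₁ x} {h₃ : H.Adj x a₂} {h₄ : H.Adj b₂ x}
  {A : H.Walk a₁ b₁} {B : H.Walk a₂ b₂}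
  {A' : G.Walk (Sum.inl a₁) (Sum.inl b₁)} {B' : G.Walk (Sum.inl a₂) (Sum.inl b₂)}
  {r₁ : G.Walk (Sum.inl b₁) (Sum.inl a₂)} {r₂ : G.Walk (Sum.inl b₂) (Sum.inl a₁)}

theorem not_exists_inr_mem_map_inl (e : Sym2 V) : ¬∃ i : ι, Sum.inr i ∈ Sym2.map Sum.inl e := by
  simp [Sym2.mem_map]

theorem isTrail_splice (hc : (cons h₁ ((A.concat h₂).append (cons h₃ (B.concat h₄)))).IsTrail)
    (hA' : A'.edges = A.edges.map (Sym2.map Sum.inl))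
    (hB' : B'.edges = B.edges.map (Sym2.map Sum.inl)) (hr : IsRoutePair x r₁ r₂) :
    (r₂.append (A'.append (r₁.append B'))).IsTrail := by
  classical
  have hAB : (A.edges ++ B.edges).Nodup := by
    refine hc.edges_nodup.sublist ?_
    simp only [edges_cons, edges_append, edges_concat, List.concat_eq_append]
    refine List.Sublist.trans ?_ (List.sublist_cons_self _ _)
    exact (List.sublist_append_left _ _).append
      ((List.sublist_append_left _ _).trans (List.sublist_cons_self _ _))
  have hperm : (r₂.edges ++ (A'.edges ++ (r₁.edges ++ B'.edges))).Perm
      ((A.edges ++ B.edges).map (Sym2.map Sum.inl) ++ (r₁.edges ++ r₂.edges)) := by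
    rw [List.perm_iff_count]
    intro e
    simp only [hA', hB', List.map_append, List.count_append]
    omega
  rw [isTrail_def, edges_append, edges_append, edges_append, hperm.nodup_iff]
  refine (hAB.map (Sym2.map.injective Sum.inl_injective)).append hr.2.2.1 ?_
  intro e he he'
  obtain ⟨e', -, rfl⟩ := List.mem_map.mp he
  exact not_exists_inr_mem_map_inl e' ((hr.2.2.2 _).mp he').2

theorem mem_edges_splice (hG : ∀ v w, G.Adj (Sum.inl v) (Sum.inl w) → H.Adj v w ∧ v ≠ x ∧ w ≠ x)
    (hc : ∀ e ∈ H.edgeSet, e ∈ (cons h₁ ((A.concat h₂).append (cons h₃ (B.concat h₄)))).edges)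
    (hA' : A'.edges = A.edges.map (Sym2.map Sum.inl))
    (hB' : B'.edges = B.edges.map (Sym2.map Sum.inl)) (hr : IsRoutePair x r₁ r₂)
    {e : Sym2 (V ⊕ ι)} (he : e ∈ G.edgeSet) : e ∈ (r₂.append (A'.append (r₁.append B'))).edges := by
  simp only [edges_append, List.mem_append]
  by_cases hi : ∃ i, Sum.inr i ∈ e
  · have := (hr.2.2.2 e).mpr ⟨he, hi⟩
    rw [List.mem_append] at this
    tauto
  induction e using Sym2.ind with
  | _ p q =>
  obtain ⟨v, rfl⟩ : ∃ v, p = Sum.inl v := by cases p <;> simp_all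
  obtain ⟨w, rfl⟩ : ∃ w, q = Sum.inl w := by cases q <;> simp_all
  obtain ⟨hvw, hv, hw⟩ := hG v w he
  have hold := hc s(v, w) hvw
  simp only [edges_cons, edges_append, edges_concat, List.concat_eq_append, List.mem_cons,
    List.mem_append, List.not_mem_nil, Sym2.eq_iff, hv, hw, false_and, and_false, false_or,
    or_false] at hold
  rw [hA', hB']
  rcases hold with hA | hB
  · exact Or.inr (Or.inl (List.mem_map_of_mem (f := Sym2.map Sum.inl) hA))
  · exact Or.inr (Or.inr (Or.inr (List.mem_map_of_mem (f := Sym2.map Sum.inl) hB)))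

theorem circuitLSA4_splice (hA : x ∉ A.support) (hB : x ∉ B.support)
    (hA' : A'.support = A.support.map Sum.inl) (hB' : B'.support = B.support.map Sum.inl)
    (hr : IsRoutePair x r₁ r₂)
    (hc : CircuitLSA4 (cons h₁ ((A.concat h₂).append (cons h₃ (B.concat h₄))))) :
    CircuitLSA4 (r₂.append (A'.append (r₁.append B'))) := by
  obtain ⟨⟨m₁, hm₁, hnd₁, hlen₁, hx₁⟩, ⟨m₂, hm₂, hnd₂, hlen₂, hx₂⟩, -⟩ := hr
  have hold : (cons h₁ ((A.concat h₂).append (cons h₃ (B.concat h₄)))).support.tail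
      = A.support ++ x :: (B.support ++ [x]) := by
    simp [support_append, support_concat]
  obtain ⟨sA, hsA⟩ : ∃ l, A.support = a₁ :: l := ⟨_, A.cons_tail_support.symm⟩
  obtain ⟨sB, hsB⟩ : ∃ l, B.support = a₂ :: l := ⟨_, B.cons_tail_support.symm⟩
  have hnew : (r₂.append (A'.append (r₁.append B'))).support.tail
      = m₂ ++ A.support.map Sum.inl ++ m₁ ++ B.support.map Sum.inl := by
    rw [tail_support_append, tail_support_append, tail_support_append, hm₁, hm₂, hA', hB', hsA, hsB]
    simp
  rw [circuitLSA4_iff, hold] at hc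
  rw [circuitLSA4_iff, hnew]
  exact hc.splice Sum.inl_injective hA hB hnd₁ hnd₂ hlen₁ hlen₂ hx₁ hx₂

theorem hasLSA4EulerianCircuit_splice
    (hG : ∀ v w, G.Adj (Sum.inl v) (Sum.inl w) ↔ H.Adj v w ∧ v ≠ x ∧ w ≠ x)
    (hA : x ∉ A.support) (hB : x ∉ B.support)
    (hc : IsEulerianTrail (cons h₁ ((A.concat h₂).append (cons h₃ (B.concat h₄)))))
    (hlsa : CircuitLSA4 (cons h₁ ((A.concat h₂).append (cons h₃ (B.concat h₄)))))
    (hr : IsRoutePair x r₁ r₂) : HasLSA4EulerianCircuit G := by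
  have hlift : ∀ v w, H.Adj v w → v ≠ x → w ≠ x → G.Adj (Sum.inl v) (Sum.inl w) :=
    fun v w h hv hw => (hG v w).mpr ⟨h, hv, hw⟩
  obtain ⟨A', hAs, hAe⟩ := A.exists_map_of_notMem_support Sum.inl hlift hA
  obtain ⟨B', hBs, hBe⟩ := B.exists_map_of_notMem_support Sum.inl hlift hB
  refine ⟨_, r₂.append (A'.append (r₁.append B')), ⟨isTrail_splice hc.1 hAe hBe hr, fun e => ?_⟩,
    circuitLSA4_splice hA hB hAs hBs hr hlsa⟩
  exact ⟨fun he => mem_edges_splice (fun v w h => (hG v w).mp h) (fun e he => (hc.2 e).mp he)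
    hAe hBe hr he, fun he => edges_subset_edgeSet _ he⟩

end Splice

section FourCycle

variable {G : SimpleGraph (V ⊕ Fin 4)} {x a b c d : V}

def gadgetEdges (x a b c d : V) : List (Sym2 (V ⊕ Fin 4)) :=
  [s(Sum.inl x, Sum.inr 0), s(Sum.inl x, Sum.inr 1), s(Sum.inl x, Sum.inr 2),
   s(Sum.inl x, Sum.inr 3),
   s(Sum.inr 0, Sum.inr 1), s(Sum.inr 1, Sum.inr 2), s(Sum.inr 2, Sum.inr 3),
   s(Sum.inr 3, Sum.inr 0),
   s(Sum.inl a, Sum.inr 0), s(Sum.inl b, Sum.inr 1), s(Sum.inl c, Sum.inr 2),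
   s(Sum.inl d, Sum.inr 3)]

theorem gadgetEdges_nodup (hxa : x ≠ a) (hxb : x ≠ b) (hxc : x ≠ c) (hxd : x ≠ d) :
    (gadgetEdges x a b c d).Nodup := by
  simp [gadgetEdges, hxa, hxb, hxc, hxd]

variable
  (hG2 : ∀ (v : V) (i : Fin 4), G.Adj (Sum.inl v) (Sum.inr i) ↔
    (v = x ∨ (i = 0 ∧ v = a) ∨ (i = 1 ∧ v = b) ∨ (i = 2 ∧ v = c) ∨ (i = 3 ∧ v = d)))
  (hG3 : ∀ i j : Fin 4, G.Adj (Sum.inr i) (Sum.inr j) ↔ (j = i + 1 ∨ i = j + 1))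

include hG2 hG3

theorem mem_gadgetEdges_iff {e : Sym2 (V ⊕ Fin 4)} :
    e ∈ gadgetEdges x a b c d ↔ e ∈ G.edgeSet ∧ ∃ i, Sum.inr i ∈ e := by
  constructor
  · intro he
    simp only [gadgetEdges, List.mem_cons, List.not_mem_nil, or_false] at he
    rcases he with rfl | rfl | rfl | rfl | rfl | rfl | rfl | rfl | rfl | rfl | rfl | rfl <;>
      simp [hG2, hG3]
  · rintro ⟨he, i, hi⟩
    obtain ⟨w, rfl⟩ := Sym2.mem_iff_exists.mp hi
    rcases w with v | j
    · rcases (hG2 v i).mp (G.adj_symm he) with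
        rfl | ⟨rfl, rfl⟩ | ⟨rfl, rfl⟩ | ⟨rfl, rfl⟩ | ⟨rfl, rfl⟩
      · fin_cases i <;> simp [gadgetEdges, Sym2.eq_swap]
      all_goals simp [gadgetEdges, Sym2.eq_swap]
    · have := (hG3 i j).mp he
      fin_cases i <;> fin_cases j <;> simp_all [gadgetEdges, Sym2.eq_swap]

variable (hxa : x ≠ a) (hxb : x ≠ b) (hxc : x ≠ c) (hxd : x ≠ d)

include hxa hxb hxc hxd

theorem IsRoutePair.of_subset {p₁ q₁ p₂ q₂ : V} {r₁ : G.Walk (Sum.inl p₁) (Sum.inl q₁)}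
    {r₂ : G.Walk (Sum.inl p₂) (Sum.inl q₂)} (h₁ : IsGadgetRoute x r₁) (h₂ : IsGadgetRoute x r₂)
    (hsub : gadgetEdges x a b c d ⊆ r₁.edges ++ r₂.edges)
    (hlen : (r₁.edges ++ r₂.edges).length ≤ 12) : IsRoutePair x r₁ r₂ := by
  have hnd := gadgetEdges_nodup hxa hxb hxc hxd
  have hperm := (hnd.subperm hsub).perm_of_length_le (by simpa [gadgetEdges] using hlen)
  exact ⟨h₁, h₂, hperm.nodup_iff.mp hnd,
    fun e => hperm.mem_iff.symm.trans (mem_gadgetEdges_iff hG2 hG3)⟩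

theorem exists_routePair_ab_cd :
    ∃ (r₁ : G.Walk (Sum.inl a) (Sum.inl b)) (r₂ : G.Walk (Sum.inl c) (Sum.inl d)),
      IsRoutePair x r₁ r₂ := by
  -- a e h g x f b  and  c g f e x h d
  refine ⟨.cons ((hG2 a 0).mpr (by simp)) <| .cons ((hG3 0 3).mpr (by decide)) <|
      .cons ((hG3 3 2).mpr (by decide)) <| .cons ((hG2 x 2).mpr (.inl rfl)).symm <|
      .cons ((hG2 x 1).mpr (.inl rfl)) <| .cons ((hG2 b 1).mpr (by simp)).symm .nil,
    .cons ((hG2 c 2).mpr (by simp)) <| .cons ((hG3 2 1).mpr (by decide)) <|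
      .cons ((hG3 1 0).mpr (by decide)) <| .cons ((hG2 x 0).mpr (.inl rfl)).symm <|
      .cons ((hG2 x 3).mpr (.inl rfl)) <| .cons ((hG2 d 3).mpr (by simp)).symm .nil, ?_⟩
  refine IsRoutePair.of_subset hG2 hG3 hxa hxb hxc hxd
    ⟨[.inr 0, .inr 3, .inr 2, .inl x, .inr 1], rfl, by simp, by simp, by simp⟩
    ⟨[.inr 2, .inr 1, .inr 0, .inl x, .inr 3], rfl, by simp, by simp, by simp⟩ ?_ (by simp)
  simp [gadgetEdges, List.subset_def, Sym2.eq_swap]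

theorem exists_routePair_ac_bd :
    ∃ (r₁ : G.Walk (Sum.inl a) (Sum.inl c)) (r₂ : G.Walk (Sum.inl b) (Sum.inl d)),
      IsRoutePair x r₁ r₂ := by
  -- a e f x h g c  and  b f g x e h d
  refine ⟨.cons ((hG2 a 0).mpr (by simp)) <| .cons ((hG3 0 1).mpr (by decide)) <|
      .cons ((hG2 x 1).mpr (.inl rfl)).symm <| .cons ((hG2 x 3).mpr (.inl rfl)) <|
      .cons ((hG3 3 2).mpr (by decide)) <| .cons ((hG2 c 2).mpr (by simp)).symm .nil,
    .cons ((hG2 b 1).mpr (by simp)) <| .cons ((hG3 1 2).mpr (by decide)) <|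
      .cons ((hG2 x 2).mpr (.inl rfl)).symm <| .cons ((hG2 x 0).mpr (.inl rfl)) <|
      .cons ((hG3 0 3).mpr (by decide)) <| .cons ((hG2 d 3).mpr (by simp)).symm .nil, ?_⟩
  refine IsRoutePair.of_subset hG2 hG3 hxa hxb hxc hxd
    ⟨[.inr 0, .inr 1, .inl x, .inr 3, .inr 2], rfl, by simp, by simp, by simp⟩
    ⟨[.inr 1, .inr 2, .inl x, .inr 0, .inr 3], rfl, by simp, by simp, by simp⟩ ?_ (by simp)
  simp [gadgetEdges, List.subset_def, Sym2.eq_swap]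

theorem exists_routePair_ad_bc :
    ∃ (r₁ : G.Walk (Sum.inl a) (Sum.inl d)) (r₂ : G.Walk (Sum.inl b) (Sum.inl c)),
      IsRoutePair x r₁ r₂ := by
  -- a e f g x h d  and  b f x e h g c
  refine ⟨.cons ((hG2 a 0).mpr (by simp)) <| .cons ((hG3 0 1).mpr (by decide)) <|
      .cons ((hG3 1 2).mpr (by decide)) <| .cons ((hG2 x 2).mpr (.inl rfl)).symm <|
      .cons ((hG2 x 3).mpr (.inl rfl)) <| .cons ((hG2 d 3).mpr (by simp)).symm .nil,
    .cons ((hG2 b 1).mpr (by simp)) <| .cons ((hG2 x 1).mpr (.inl rfl)).symm <|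
      .cons ((hG2 x 0).mpr (.inl rfl)) <| .cons ((hG3 0 3).mpr (by decide)) <|
      .cons ((hG3 3 2).mpr (by decide)) <| .cons ((hG2 c 2).mpr (by simp)).symm .nil, ?_⟩
  refine IsRoutePair.of_subset hG2 hG3 hxa hxb hxc hxd
    ⟨[.inr 0, .inr 1, .inr 2, .inl x, .inr 3], rfl, by simp, by simp, by simp⟩
    ⟨[.inr 1, .inl x, .inr 0, .inr 3, .inr 2], rfl, by simp, by simp, by simp⟩ ?_ (by simp)
  simp [gadgetEdges, List.subset_def, Sym2.eq_swap]

/-- Every ordering of `a, b, c, d` is one of the three matchings, up to swapping and reversing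
the two routes. -/
theorem exists_routePair {p q r s : V} (hnd : [p, q, r, s].Nodup)
    (hp : p = a ∨ p = b ∨ p = c ∨ p = d) (hq : q = a ∨ q = b ∨ q = c ∨ q = d)
    (hr : r = a ∨ r = b ∨ r = c ∨ r = d) (hs : s = a ∨ s = b ∨ s = c ∨ s = d) :
    ∃ (r₁ : G.Walk (Sum.inl p) (Sum.inl q)) (r₂ : G.Walk (Sum.inl r) (Sum.inl s)),
      IsRoutePair x r₁ r₂ := by
  obtain ⟨u₁, u₂, hu⟩ := exists_routePair_ab_cd hG2 hG3 hxa hxb hxc hxd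
  obtain ⟨v₁, v₂, hv⟩ := exists_routePair_ac_bd hG2 hG3 hxa hxb hxc hxd
  obtain ⟨w₁, w₂, hw⟩ := exists_routePair_ad_bc hG2 hG3 hxa hxb hxc hxd
  rcases hp with rfl | rfl | rfl | rfl <;> rcases hq with rfl | rfl | rfl | rfl <;>
    try (simp at hnd; done)
  all_goals rcases hr with rfl | rfl | rfl | rfl <;> try (simp at hnd; done)
  all_goals rcases hs with rfl | rfl | rfl | rfl <;> try (simp at hnd; done)
  all_goals first
    | exact ⟨_, _, hu⟩ | exact ⟨_, _, hu.reverse_left⟩ | exact ⟨_, _, hu.reverse_right⟩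
    | exact ⟨_, _, hu.reverse_left.reverse_right⟩ | exact ⟨_, _, hu.swap⟩
    | exact ⟨_, _, hu.reverse_left.swap⟩ | exact ⟨_, _, hu.reverse_right.swap⟩
    | exact ⟨_, _, hu.reverse_left.reverse_right.swap⟩
    | exact ⟨_, _, hv⟩ | exact ⟨_, _, hv.reverse_left⟩ | exact ⟨_, _, hv.reverse_right⟩
    | exact ⟨_, _, hv.reverse_left.reverse_right⟩ | exact ⟨_, _, hv.swap⟩
    | exact ⟨_, _, hv.reverse_left.swap⟩ | exact ⟨_, _, hv.reverse_right.swap⟩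
    | exact ⟨_, _, hv.reverse_left.reverse_right.swap⟩
    | exact ⟨_, _, hw⟩ | exact ⟨_, _, hw.reverse_left⟩ | exact ⟨_, _, hw.reverse_right⟩
    | exact ⟨_, _, hw.reverse_left.reverse_right⟩ | exact ⟨_, _, hw.swap⟩
    | exact ⟨_, _, hw.reverse_left.swap⟩ | exact ⟨_, _, hw.reverse_right.swap⟩
    | exact ⟨_, _, hw.reverse_left.reverse_right.swap⟩

end FourCycle

theorem adj_inl_inl_iff {ι : Type*} {H : SimpleGraph V} {G : SimpleGraph (V ⊕ ι)} {x a b c d : V}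
    (hN : H.neighborSet x = {a, b, c, d})
    (hG1 : ∀ v w : V, G.Adj (Sum.inl v) (Sum.inl w) ↔
      (H.Adj v w ∧ s(v, w) ∉ ({s(x, a), s(x, b), s(x, c), s(x, d)} : Set (Sym2 V))))
    (v w : V) : G.Adj (Sum.inl v) (Sum.inl w) ↔ H.Adj v w ∧ v ≠ x ∧ w ≠ x := by
  have hxN : ∀ y, H.Adj x y → y = a ∨ y = b ∨ y = c ∨ y = d := fun y hy => by
    rw [← mem_neighborSet, hN] at hy
    simpa using hy
  rw [hG1]
  constructor
  · rintro ⟨h, hne⟩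
    refine ⟨h, ?_, ?_⟩ <;> rintro rfl <;> apply hne
    · rcases hxN w h with rfl | rfl | rfl | rfl <;> simp
    · rcases hxN v h.symm with rfl | rfl | rfl | rfl <;> simp [Sym2.eq_swap]
  · rintro ⟨h, hv, hw⟩
    exact ⟨h, by simp [hv, hw]⟩

/-- The new vertices `e, f, g, h` are `Sum.inr 0, …, Sum.inr 3`. -/
theorem fourCycleAddition_preserves_LSA4 {V : Type} [Fintype V]
    (H : SimpleGraph V) (x a b c d : V)
    (hab : a ≠ b) (hac : a ≠ c) (had : a ≠ d) (hbc : b ≠ c) (hbd : b ≠ d) (hcd : c ≠ d)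
    (hN : H.neighborSet x = {a, b, c, d})
    (G : SimpleGraph (V ⊕ Fin 4))
    (hG1 : ∀ v w : V, G.Adj (Sum.inl v) (Sum.inl w) ↔
      (H.Adj v w ∧ s(v, w) ∉ ({s(x, a), s(x, b), s(x, c), s(x, d)} : Set (Sym2 V))))
    (hG2 : ∀ (v : V) (i : Fin 4), G.Adj (Sum.inl v) (Sum.inr i) ↔
      (v = x ∨ (i = 0 ∧ v = a) ∨ (i = 1 ∧ v = b) ∨ (i = 2 ∧ v = c) ∨ (i = 3 ∧ v = d)))
    (hG3 : ∀ i j : Fin 4, G.Adj (Sum.inr i) (Sum.inr j) ↔ (j = i + 1 ∨ i = j + 1))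
    (hH : HasLSA4EulerianCircuit H) :
    HasLSA4EulerianCircuit G := by
  classical
  have hxN : ∀ y, H.Adj x y ↔ y = a ∨ y = b ∨ y = c ∨ y = d := fun y => by
    rw [← mem_neighborSet, hN]
    simp
  have hx : ∀ y, y = a ∨ y = b ∨ y = c ∨ y = d → x ≠ y := fun y hy => ((hxN y).mpr hy).ne
  obtain ⟨W, hW, hlsa⟩ := hH.exists_circuit_at ((hxN a).mpr (.inl rfl))
  have hdeg : W.edges.countP (x ∈ ·) = 4 := by
    rw [hW.isEulerian.countP_mem_edges_eq_degree, ← card_neighborFinset_eq_degree,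
      neighborFinset, Set.toFinset_congr hN]
    simp [hab, hac, had, hbc, hbd, hcd]
  obtain ⟨a₁, b₁, a₂, b₂, h₁, h₂, h₃, h₄, A, B, hA, hB, rfl⟩ :=
    W.exists_eq_cons_concat_append_cons_concat hdeg
  obtain ⟨r₁, r₂, hr⟩ := exists_routePair hG2 hG3 (hx a (by simp)) (hx b (by simp))
    (hx c (by simp)) (hx d (by simp)) (Walk.nodup_of_isTrail_cons_concat_append hW.1)
    ((hxN b₁).mp h₂.symm) ((hxN a₂).mp h₃) ((hxN b₂).mp h₄.symm) ((hxN a₁).mp h₁)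
  exact hasLSA4EulerianCircuit_splice (adj_inl_inl_iff hN hG1) hA hB hW hlsa hr

end Quartic
end

section
/- Let G be a simple graph and let x ≠ y be two vertices of G. Suppose the edge set E(G) is partitioned into four pairwise edge-disjoint trails: P and Q, each from x to y, and R and S, each from y to x, all four 4-locally self-avoiding and of length at least 3. Suppose moreover that x and y occur in these trails only as endpoints (never as internal vertices), and that every vertex lying both on one of P, Q and on one of R, S is equal to x or y. Then the closed walk obtained by concatenating P (from x to y), R (from y to x), Q (from x to y), and S (from y to x) is a 4-locally self-avoiding Eulerian circuit of G. -/
open SimpleGraph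

namespace Quartic

variable {V : Type*}

/-! The circuit `P R Q S` is an edge-disjoint union, so it is an Eulerian trail. A short
subcycle of it starts inside one of the four trails, and after rotating the circuit we may
assume it starts in a trail `A : x → y` followed by `B : y → x`, which in turn is followed by
a vertex `x`. Since it has length at most `4 ≤ |B| + 1`, it closes in `A`, in `B`, or at
that `x`. Closing in `A` contradicts `A` being 4-locally self-avoiding; otherwise its base
vertex lies on both `A` and `B`, hence is `x` or `y`, and neither endpoint can occur where the
subcycle would need it. -/

theorem _root_.SimpleGraph.Walk.support_dropLast_append {G : SimpleGraph V} {u v w : V}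
    (p : G.Walk u v) (q : G.Walk v w) :
    (p.append q).support.dropLast = p.support.dropLast ++ q.support.dropLast := by
  rw [Walk.support_append_eq_support_dropLast_append,
    List.dropLast_append_of_ne_nil q.support_ne_nil]

section SupportIndex

variable {G : SimpleGraph V} {u v w : V} (p : G.Walk u v)

theorem _root_.SimpleGraph.Walk.getElem?_support_dropLast_append (l : List V) {k : ℕ}
    (hk : k < p.length) : (p.support.dropLast ++ l)[k]? = p.support[k]? := by
  rw [List.getElem?_append_left (by simpa using hk), List.getElem?_dropLast]
  simp [hk]

theorem _root_.SimpleGraph.Walk.getElem?_zero_support_dropLast_append (hp : 0 < p.length)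
    (l : List V) : (p.support.dropLast ++ l)[0]? = some u := by
  rw [p.getElem?_support_dropLast_append l hp]
  simp

theorem _root_.SimpleGraph.Walk.getElem?_support_dropLast_append_length_add (l : List V)
    (j : ℕ) : (p.support.dropLast ++ l)[p.length + j]? = l[j]? := by
  rw [List.getElem?_append_right (by simp)]
  simp

theorem _root_.SimpleGraph.Walk.mem_support_tail_dropLast {k : ℕ} (hk₀ : 0 < k)
    (hk : k < p.length) (h : p.support[k]? = some w) : w ∈ p.support.tail.dropLast := by
  apply List.mem_of_getElem? (i := k - 1)
  rw [List.getElem?_dropLast, List.getElem?_tail, Nat.sub_add_cancel hk₀,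
    if_pos (by simp; omega)]
  exact h

theorem _root_.SimpleGraph.Walk.eq_zero_of_getElem?_support_eq_start (huv : u ≠ v)
    (hu : u ∉ p.support.tail.dropLast) {k : ℕ} (h : p.support[k]? = some u) : k = 0 := by
  obtain ⟨hk, hget⟩ := List.getElem?_eq_some_iff.mp h
  by_contra hk₀
  rcases (show k < p.length ∨ k = p.length by simp at hk; omega) with hk | rfl
  · exact hu (p.mem_support_tail_dropLast (Nat.pos_of_ne_zero hk₀) hk h)
  · exact huv (hget.symm.trans p.support_getElem_length)

theorem _root_.SimpleGraph.Walk.eq_length_of_getElem?_support_eq_end (huv : u ≠ v)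
    (hv : v ∉ p.support.tail.dropLast) {k : ℕ} (h : p.support[k]? = some v) :
    k = p.length := by
  obtain ⟨hk, hget⟩ := List.getElem?_eq_some_iff.mp h
  by_contra hkp
  rcases Nat.eq_zero_or_pos k with rfl | hk₀
  · exact huv (p.support_getElem_zero.symm.trans hget)
  · exact hv (p.mem_support_tail_dropLast hk₀ (by simp at hk; omega) h)

end SupportIndex

section Subcycles

variable {l l' a b c d : List V} {i n t : ℕ}

theorem ShortSubcycleAt.of_getElem?_eq (h : ShortSubcycleAt l i t)
    (hl : ∀ k ≤ i + t, l[k]? = l'[k]?) (hlen : i + t < l'.length) :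
    ShortSubcycleAt l' i t := by
  obtain ⟨ht₁, ht₄, -, heq, hdist⟩ := h
  refine ⟨ht₁, ht₄, hlen, by rw [← hl i (by omega), ← hl (i + t) le_rfl, heq], ?_⟩
  intro p q hip hpq hq
  rw [← hl p (by omega), ← hl q (by omega)]
  exact hdist p q hip hpq hq

theorem CyclicShortSubcycleAt.shortSubcycleAt (h : CyclicShortSubcycleAt l i t)
    (hlen : i + t < l.length) : ShortSubcycleAt l i t := by
  obtain ⟨ht₁, ht₄, -, heq, hdist⟩ := h
  rw [Nat.mod_eq_of_lt (by omega), Nat.mod_eq_of_lt hlen] at heq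
  refine ⟨ht₁, ht₄, hlen, heq, fun p q hip hpq hq => ?_⟩
  have := hdist (p - i) (q - i) (by omega) (by omega)
  rwa [Nat.add_sub_cancel' hip, Nat.add_sub_cancel' (by omega), Nat.mod_eq_of_lt (by omega),
    Nat.mod_eq_of_lt (by omega)] at this

theorem CyclicShortSubcycleAt.mod_length (h : CyclicShortSubcycleAt l i t) :
    CyclicShortSubcycleAt l (i % l.length) t := by
  obtain ⟨ht₁, ht₄, ht, heq, hdist⟩ := h
  refine ⟨ht₁, ht₄, ht, by rwa [Nat.mod_mod, Nat.mod_add_mod], fun p q hpq hq => ?_⟩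
  rw [Nat.mod_add_mod, Nat.mod_add_mod]
  exact hdist p q hpq hq

theorem CyclicShortSubcycleAt.rotate (h : CyclicShortSubcycleAt l (i + n) t) :
    CyclicShortSubcycleAt (l.rotate n) i t := by
  obtain ⟨ht₁, ht₄, ht, heq, hdist⟩ := h
  have hl : 0 < l.length := by omega
  have hget : ∀ m, (l.rotate n)[m % l.length]? = l[(m + n) % l.length]? := fun m => by
    rw [List.getElem?_rotate (by simpa using Nat.mod_lt m hl), Nat.mod_add_mod]
  refine ⟨ht₁, ht₄, by simpa using ht, ?_, fun p q hpq hq => ?_⟩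
  · rw [List.length_rotate, hget, hget, Nat.add_right_comm]
    exact heq
  · rw [List.length_rotate, hget, hget, Nat.add_right_comm, Nat.add_right_comm i q]
    exact hdist p q hpq hq

theorem CyclicShortSubcycleAt.append_comm (h : CyclicShortSubcycleAt (a ++ b) i t)
    (hi : a.length ≤ i) : CyclicShortSubcycleAt (b ++ a) (i - a.length) t := by
  rw [← List.rotate_append_length_eq]
  exact CyclicShortSubcycleAt.rotate (by rwa [Nat.sub_add_cancel hi])

theorem CyclicShortSubcycleAt.exists_start_lt_length_of_append
    (h : CyclicShortSubcycleAt (a ++ (b ++ (c ++ d))) i t) :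
    (∃ i < a.length, CyclicShortSubcycleAt (a ++ (b ++ (c ++ d))) i t) ∨
    (∃ i < b.length, CyclicShortSubcycleAt (b ++ (c ++ (d ++ a))) i t) ∨
    (∃ i < c.length, CyclicShortSubcycleAt (c ++ (d ++ (a ++ b))) i t) ∨
    (∃ i < d.length, CyclicShortSubcycleAt (d ++ (a ++ (b ++ c))) i t) := by
  obtain ⟨i₀, hi₀, h₀⟩ : ∃ i₀ < (a ++ (b ++ (c ++ d))).length,
      CyclicShortSubcycleAt (a ++ (b ++ (c ++ d))) i₀ t :=
    ⟨_, Nat.mod_lt i (by obtain ⟨ht₁, -, ht, -⟩ := h; omega), h.mod_length⟩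
  simp only [List.length_append] at hi₀
  rcases lt_or_ge i₀ a.length with ha | ha
  · exact .inl ⟨i₀, ha, h₀⟩
  have h₁ := h₀.append_comm ha
  simp only [List.append_assoc] at h₁
  rcases lt_or_ge (i₀ - a.length) b.length with hb | hb
  · exact .inr (.inl ⟨_, hb, h₁⟩)
  have h₂ := h₁.append_comm hb
  simp only [List.append_assoc] at h₂
  rcases lt_or_ge (i₀ - a.length - b.length) c.length with hc | hc
  · exact .inr (.inr (.inl ⟨_, hc, h₂⟩))
  have h₃ := h₂.append_comm hc
  simp only [List.append_assoc] at h₃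
  exact .inr (.inr (.inr ⟨_, by omega, h₃⟩))

end Subcycles

theorem not_cyclicShortSubcycleAt_of_lt_length {G : SimpleGraph V} {x y : V} (hxy : x ≠ y)
    {A : G.Walk x y} {B : G.Walk y x} {l : List V} (hl : l[0]? = some x)
    (hA : TrailLSA4 A) (hAlen : 2 ≤ A.length) (hBlen : 3 ≤ B.length)
    (hxA : x ∉ A.support.tail.dropLast) (hyA : y ∉ A.support.tail.dropLast)
    (hxB : x ∉ B.support.tail.dropLast)
    (hmeet : ∀ v, v ∈ A.support → v ∈ B.support → v = x ∨ v = y) {i t : ℕ}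
    (hi : i < A.length) :
    ¬ CyclicShortSubcycleAt (A.support.dropLast ++ (B.support.dropLast ++ l)) i t := by
  intro h
  have hlen : (A.support.dropLast ++ (B.support.dropLast ++ l)).length
      = A.length + B.length + l.length := by simp; omega
  have hl₀ : 0 < l.length := (List.getElem?_eq_some_iff.mp hl).1
  have ht₄ : t ≤ 4 := h.2.1
  have hs := h.shortSubcycleAt (by omega)
  rcases lt_or_ge (i + t) A.length with hin | hout
  · refine hA ⟨i, t, hs.of_getElem?_eq (fun k hk => ?_) (by simp; omega)⟩
    exact A.getElem?_support_dropLast_append _ (by omega)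
  obtain ⟨-, -, -, heq, -⟩ := hs
  obtain ⟨v, hAi⟩ : ∃ v, A.support[i]? = some v :=
    ⟨_, List.getElem?_eq_getElem (by simp; omega)⟩
  rw [A.getElem?_support_dropLast_append _ hi, hAi] at heq
  obtain ⟨j, hj⟩ : ∃ j, i + t = A.length + j := ⟨i + t - A.length, by omega⟩
  rw [hj, A.getElem?_support_dropLast_append_length_add] at heq
  rcases lt_or_ge j B.length with hjB | hjB
  · rw [B.getElem?_support_dropLast_append _ hjB] at heq
    rcases hmeet _ (List.mem_of_getElem? hAi) (List.mem_of_getElem? heq.symm) with hv | hv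
    · rw [hv] at heq
      exact absurd (B.eq_length_of_getElem?_support_eq_end hxy.symm hxB heq.symm) (by omega)
    · rw [hv] at hAi
      exact absurd (A.eq_length_of_getElem?_support_eq_end hxy hyA hAi) (by omega)
  · rw [show j = B.length + 0 by omega, B.getElem?_support_dropLast_append_length_add, hl,
      Option.some_inj] at heq
    rw [heq] at hAi
    exact absurd (A.eq_zero_of_getElem?_support_eq_start hxy hxA hAi) (by omega)

theorem stitch_four_trails_general {V : Type}
    (G : SimpleGraph V) (x y : V) (hxy : x ≠ y)
    (P Q : G.Walk x y) (R S : G.Walk y x)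
    (hPt : P.IsTrail) (hQt : Q.IsTrail) (hRt : R.IsTrail) (hSt : S.IsTrail)
    (hPl : TrailLSA4 P) (hQl : TrailLSA4 Q) (hRl : TrailLSA4 R) (hSl : TrailLSA4 S)
    (hPlen : 3 ≤ P.length) (hQlen : 3 ≤ Q.length)
    (hRlen : 3 ≤ R.length) (hSlen : 3 ≤ S.length)
    (hPQ : ∀ e, e ∈ P.edges → e ∉ Q.edges) (hPR : ∀ e, e ∈ P.edges → e ∉ R.edges)
    (hPS : ∀ e, e ∈ P.edges → e ∉ S.edges) (hQR : ∀ e, e ∈ Q.edges → e ∉ R.edges)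
    (hQS : ∀ e, e ∈ Q.edges → e ∉ S.edges) (hRS : ∀ e, e ∈ R.edges → e ∉ S.edges)
    (hcover : ∀ e, e ∈ G.edgeSet →
      e ∈ P.edges ∨ e ∈ Q.edges ∨ e ∈ R.edges ∨ e ∈ S.edges)
    (hxP : x ∉ P.support.tail.dropLast) (hyP : y ∉ P.support.tail.dropLast)
    (hxQ : x ∉ Q.support.tail.dropLast) (hyQ : y ∉ Q.support.tail.dropLast)
    (hxR : x ∉ R.support.tail.dropLast) (hyR : y ∉ R.support.tail.dropLast)
    (hxS : x ∉ S.support.tail.dropLast) (hyS : y ∉ S.support.tail.dropLast)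
    (hmeet : ∀ v : V, (v ∈ P.support ∨ v ∈ Q.support) →
      (v ∈ R.support ∨ v ∈ S.support) → v = x ∨ v = y) :
    IsEulerianTrail (P.append (R.append (Q.append S))) ∧
      CircuitLSA4 (P.append (R.append (Q.append S))) := by
  refine ⟨⟨?_, fun e => ⟨fun he => ?_, fun he => Walk.edges_subset_edgeSet _ he⟩⟩, ?_⟩
  · simp only [Walk.isTrail_append, Walk.edges_append, List.disjoint_append_right]
    exact ⟨hPt, ⟨hRt, ⟨hQt, hSt, fun e => hQS e⟩, fun e he h => hQR e h he, fun e => hRS e⟩,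
      fun e => hPR e, fun e => hPQ e, fun e => hPS e⟩
  · simp only [Walk.edges_append, List.mem_append]
    rcases hcover e he with h | h | h | h <;> simp [h]
  rintro ⟨i, t, h⟩
  simp only [Walk.support_dropLast_append] at h
  rcases h.exists_start_lt_length_of_append with
    ⟨i, hi, h⟩ | ⟨i, hi, h⟩ | ⟨i, hi, h⟩ | ⟨i, hi, h⟩
  · exact not_cyclicShortSubcycleAt_of_lt_length hxy
      (Q.getElem?_zero_support_dropLast_append (by omega) _) hPl (by omega) hRlen hxP hyP hxR
      (fun v hP hR => hmeet v (.inl hP) (.inl hR)) (by simpa using hi) h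
  · exact not_cyclicShortSubcycleAt_of_lt_length hxy.symm
      (S.getElem?_zero_support_dropLast_append (by omega) _) hRl (by omega) hQlen hyR hxR hyQ
      (fun v hR hQ => (hmeet v (.inr hQ) (.inl hR)).symm) (by simpa using hi) h
  · exact not_cyclicShortSubcycleAt_of_lt_length hxy
      (P.getElem?_zero_support_dropLast_append (by omega) _) hQl (by omega) hSlen hxQ hyQ hxS
      (fun v hQ hS => hmeet v (.inr hQ) (.inr hS)) (by simpa using hi) h
  · exact not_cyclicShortSubcycleAt_of_lt_length hxy.symm
      (R.getElem?_zero_support_dropLast_append (by omega) _) hSl (by omega) hPlen hyS hxS hyP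
      (fun v hS hP => (hmeet v (.inl hP) (.inr hS)).symm) (by simpa using hi) h

/-- stitching four trails into a 4-locally self-avoiding Eulerian circuit.
`E(G)` is partitioned into four pairwise edge-disjoint 4-locally self-avoiding trails
`P, Q : x → y` and `R, S : y → x` of length ≥ 3, in which `x` and `y` occur only as
endpoints, and any vertex on both one of `P, Q` and one of `R, S` equals `x` or `y`.
Then the concatenation `P R Q S` is a 4-locally self-avoiding Eulerian circuit of `G`. -/
theorem stitch_four_trails {V : Type} [Fintype V]
    (G : SimpleGraph V) (x y : V) (hxy : x ≠ y)
    (P Q : G.Walk x y) (R S : G.Walk y x)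
    (hPt : P.IsTrail) (hQt : Q.IsTrail) (hRt : R.IsTrail) (hSt : S.IsTrail)
    (hPl : TrailLSA4 P) (hQl : TrailLSA4 Q) (hRl : TrailLSA4 R) (hSl : TrailLSA4 S)
    (hPlen : 3 ≤ P.length) (hQlen : 3 ≤ Q.length)
    (hRlen : 3 ≤ R.length) (hSlen : 3 ≤ S.length)
    (hPQ : ∀ e, e ∈ P.edges → e ∉ Q.edges) (hPR : ∀ e, e ∈ P.edges → e ∉ R.edges)
    (hPS : ∀ e, e ∈ P.edges → e ∉ S.edges) (hQR : ∀ e, e ∈ Q.edges → e ∉ R.edges)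
    (hQS : ∀ e, e ∈ Q.edges → e ∉ S.edges) (hRS : ∀ e, e ∈ R.edges → e ∉ S.edges)
    (hcover : ∀ e, e ∈ G.edgeSet →
      e ∈ P.edges ∨ e ∈ Q.edges ∨ e ∈ R.edges ∨ e ∈ S.edges)
    (hxP : x ∉ P.support.tail.dropLast) (hyP : y ∉ P.support.tail.dropLast)
    (hxQ : x ∉ Q.support.tail.dropLast) (hyQ : y ∉ Q.support.tail.dropLast)
    (hxR : x ∉ R.support.tail.dropLast) (hyR : y ∉ R.support.tail.dropLast)
    (hxS : x ∉ S.support.tail.dropLast) (hyS : y ∉ S.support.tail.dropLast)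
    (hmeet : ∀ v : V, (v ∈ P.support ∨ v ∈ Q.support) →
      (v ∈ R.support ∨ v ∈ S.support) → v = x ∨ v = y) :
    IsEulerianTrail (P.append (R.append (Q.append S))) ∧
      CircuitLSA4 (P.append (R.append (Q.append S))) :=
  stitch_four_trails_general G x y hxy P Q R S hPt hQt hRt hSt hPl hQl hRl hSl hPlen hQlen hRlen
    hSlen hPQ hPR hPS hQR hQS hRS hcover hxP hyP hxQ hyQ hxR hyR hxS hyS hmeet

end Quartic
end

section
/- Let L = (ℓ_1, …, ℓ_k) be any sequence with each ℓ_i ∈ {1, 2, 3, 4} and ℓ_1 + ⋯ + ℓ_k = 11. Then F_6 admits an L-path-chain from x to y. -/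
/-!
`F₆` has the Eulerian trails `A = x a d b c d y a b x c y` and `B = x a b c d y a d b x c y`
from `x` to `y`. Each returns to a vertex within at most four steps only once: `A` at `d`
between positions 2 and 5, `B` at `d` between positions 4 and 7. Cutting such a trail at the
partial sums of `L` gives pieces of length at most 4, and these are paths as soon as some cut
falls strictly inside that return. The first partial sum exceeding 2 lies between 3 and 6;
use `A` if it is at most 4 and `B` otherwise.
-/

open SimpleGraph

namespace List

theorem Nodup.disjoint_take_drop_take_drop {α : Type*} {l : List α} (hl : l.Nodup)
    {a s b t : ℕ} (h : a + s ≤ b) : ((l.drop a).take s).Disjoint ((l.drop b).take t) := by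
  rw [take_drop]
  exact disjoint_of_subset_left (drop_subset _ _)
    (disjoint_of_subset_right (take_subset _ _) (disjoint_take_drop hl h))

theorem getElem_mem_take_drop {α : Type*} (l : List α) {a t n : ℕ} (hn : n < l.length)
    (ha : a ≤ n) (ht : n < a + t) : l[n] ∈ (l.drop a).take t :=
  mem_iff_getElem.2 ⟨n - a, by simp; omega, by simp [Nat.add_sub_cancel' ha]⟩

end List

namespace Fin

variable {M : Type*} {k : ℕ}

theorem partialSum_last [AddCommMonoid M] (f : Fin k → M) :
    partialSum f (last k) = ∑ i, f i := by
  simp [partialSum, List.take_of_length_le, List.sum_ofFn]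

theorem monotone_partialSum [AddMonoid M] [Preorder M] [CanonicallyOrderedAdd M]
    (f : Fin k → M) : Monotone (partialSum f) :=
  monotone_iff_le_succ.2 fun i => by rw [partialSum_succ]; exact le_self_add

theorem exists_partialSum_le_lt [AddMonoid M] [LinearOrder M] [CanonicallyOrderedAdd M]
    (f : Fin k → M) {x : M} (hx : x < partialSum f (last k)) :
    ∃ i : Fin k, partialSum f i.castSucc ≤ x ∧ x < partialSum f i.succ := by
  induction k with
  | zero => simp at hx
  | succ k ih =>
    by_cases h : x < partialSum f (last k).castSucc
    · obtain ⟨i, hi⟩ := ih (init f) (by rwa [partialSum_init])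
      exact ⟨i.castSucc, by simpa only [partialSum_init, succ_castSucc] using hi⟩
    · exact ⟨last k, not_lt.1 h, by rwa [succ_last]⟩

end Fin

namespace SimpleGraph.Walk

variable {V : Type*} {G : SimpleGraph V} {u v : V}

theorem isEulerian_of_forall_adj [DecidableEq V] (W : G.Walk u v) (hW : W.IsTrail)
    (hcov : ∀ x y, G.Adj x y → s(x, y) ∈ W.edges) : W.IsEulerian :=
  hW.isEulerian_of_forall_mem fun e he => by
    induction e using Sym2.ind with
    | _ x y => exact hcov x y he

theorem isPath_take_drop (W : G.Walk u v) {a t : ℕ}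
    (h : ∀ p q, a ≤ p → p < q → q ≤ a + t → q ≤ W.length → W.getVert p ≠ W.getVert q) :
    ((W.drop a).take t).IsPath := by
  rw [← IsPath.getVert_injOn_iff]
  intro i hi j hj hij
  simp only [Set.mem_ofPred_eq, take_length, drop_length] at hi hj
  simp only [take_getVert, drop_getVert] at hij
  rcases lt_trichotomy i j with hlt | rfl | hgt
  · exact absurd hij (h _ _ (by omega) (by omega) (by omega) (by omega))
  · rfl
  · exact absurd hij.symm (h _ _ (by omega) (by omega) (by omega) (by omega))

def ShortReturnsOnlyAt (W : G.Walk u v) (r b₁ b₂ : ℕ) : Prop :=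
  ∀ q ≤ W.length, ∀ p < q, q ≤ p + r → W.getVert p = W.getVert q → p = b₁ ∧ q = b₂

end SimpleGraph.Walk

namespace Quartic

open Fin SimpleGraph.Walk

variable {V : Type*} [DecidableEq V] {G : SimpleGraph V} {u w : V}

theorem pathChain_of_isEulerian {W : G.Walk u w} (hW : W.IsEulerian) {k : ℕ} (ℓ : Fin k → ℕ)
    (hsum : ∑ i, ℓ i = W.length)
    (hpath : ∀ i, ((W.drop (partialSum ℓ i.castSucc)).take (ℓ i)).IsPath) :
    PathChain G u w ℓ := by
  have hlast : partialSum ℓ (last k) = W.length := (partialSum_last ℓ).trans hsum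
  have hsucc (i : Fin k) : partialSum ℓ i.succ ≤ W.length :=
    hlast ▸ monotone_partialSum ℓ (le_last _)
  refine ⟨fun i => W.getVert (partialSum ℓ i),
    fun i => ((W.drop (partialSum ℓ i.castSucc)).take (ℓ i)).copy rfl
      (by simp only [drop_getVert, partialSum_succ]),
    by simp, by simp only [hlast, getVert_length], fun i => (isPath_copy ..).2 (hpath i),
    ?_, ?_, ?_⟩
  · intro i
    have := hsucc i
    rw [partialSum_succ] at this
    simp only [length_copy, take_length, drop_length]
    omega
  · have hdisj {i j : Fin k} (h : i < j) :
        (((W.drop (partialSum ℓ i.castSucc)).take (ℓ i)).edges.Disjoint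
          ((W.drop (partialSum ℓ j.castSucc)).take (ℓ j)).edges) := by
      rw [edges_take, edges_drop, edges_take, edges_drop]
      refine hW.isTrail.edges_nodup.disjoint_take_drop_take_drop ?_
      rw [← partialSum_succ]
      exact monotone_partialSum ℓ (castSucc_lt_iff_succ_le.1 (castSucc_lt_castSucc_iff.2 h))
    intro i j hij e hei hej
    simp only [edges_copy] at hei hej
    rcases lt_or_gt_of_ne hij with h | h
    · exact hdisj h hei hej
    · exact hdisj h hej hei
  · intro e he
    obtain ⟨n, hn, rfl⟩ := List.mem_iff_getElem.1 (hW.mem_edges_iff.2 he : e ∈ W.edges)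
    obtain ⟨i, hi₁, hi₂⟩ := exists_partialSum_le_lt ℓ (x := n) (by rw [hlast]; simpa using hn)
    rw [partialSum_succ] at hi₂
    exact ⟨i, by simpa only [edges_copy, edges_take, edges_drop] using
      W.edges.getElem_mem_take_drop hn hi₁ hi₂⟩

theorem pathChain_of_shortReturnsOnlyAt {W : G.Walk u w} (hW : W.IsEulerian) {r b₁ b₂ : ℕ}
    (hret : W.ShortReturnsOnlyAt r b₁ b₂) {k : ℕ} (ℓ : Fin k → ℕ) (hℓ : ∀ i, ℓ i ≤ r)
    (hsum : ∑ i, ℓ i = W.length) {m : Fin (k + 1)}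
    (hm₁ : b₁ < partialSum ℓ m) (hm₂ : partialSum ℓ m < b₂) : PathChain G u w ℓ := by
  refine pathChain_of_isEulerian hW ℓ hsum fun i => W.isPath_take_drop ?_
  intro p q hp hpq hq hqW heq
  obtain ⟨rfl, rfl⟩ := hret q hqW p hpq (by have := hℓ i; omega) heq
  rcases le_or_gt m i.castSucc with h | h
  · have := monotone_partialSum ℓ h
    omega
  · have := monotone_partialSum ℓ (castSucc_lt_iff_succ_le.1 h)
    rw [partialSum_succ] at this
    omega

instance : DecidableRel F6.Adj := by
  unfold F6
  infer_instance

def trailA : F6.Walk 0 5 :=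
  .cons (by decide : F6.Adj 0 1) <| .cons (by decide : F6.Adj 1 4) <|
  .cons (by decide : F6.Adj 4 2) <| .cons (by decide : F6.Adj 2 3) <|
  .cons (by decide : F6.Adj 3 4) <| .cons (by decide : F6.Adj 4 5) <|
  .cons (by decide : F6.Adj 5 1) <| .cons (by decide : F6.Adj 1 2) <|
  .cons (by decide : F6.Adj 2 0) <| .cons (by decide : F6.Adj 0 3) <|
  .cons (by decide : F6.Adj 3 5) .nil

def trailB : F6.Walk 0 5 :=
  .cons (by decide : F6.Adj 0 1) <| .cons (by decide : F6.Adj 1 2) <|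
  .cons (by decide : F6.Adj 2 3) <| .cons (by decide : F6.Adj 3 4) <|
  .cons (by decide : F6.Adj 4 5) <| .cons (by decide : F6.Adj 5 1) <|
  .cons (by decide : F6.Adj 1 4) <| .cons (by decide : F6.Adj 4 2) <|
  .cons (by decide : F6.Adj 2 0) <| .cons (by decide : F6.Adj 0 3) <|
  .cons (by decide : F6.Adj 3 5) .nil

theorem trailA_isEulerian : trailA.IsEulerian :=
  trailA.isEulerian_of_forall_adj ((isTrail_def _).2 (by decide)) (by decide)

theorem trailB_isEulerian : trailB.IsEulerian :=
  trailB.isEulerian_of_forall_adj ((isTrail_def _).2 (by decide)) (by decide)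

theorem trailA_shortReturnsOnlyAt : trailA.ShortReturnsOnlyAt 4 2 5 := by
  unfold ShortReturnsOnlyAt
  decide

theorem trailB_shortReturnsOnlyAt : trailB.ShortReturnsOnlyAt 4 4 7 := by
  unfold ShortReturnsOnlyAt
  decide

/-- for every sequence `L = (ℓ₁, …, ℓ_k)` with each `ℓᵢ ∈ {1, 2, 3, 4}`
and `ℓ₁ + ⋯ + ℓ_k = 11`, the graph `F₆` admits an `L`-path-chain from `x` (= vertex 0)
to `y` (= vertex 5). -/
theorem F6_pathChain (k : ℕ) (ℓ : Fin k → ℕ)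
    (hbound : ∀ i, 1 ≤ ℓ i ∧ ℓ i ≤ 4) (hsum : ∑ i, ℓ i = 11) :
    PathChain F6 (0 : Fin 6) (5 : Fin 6) ℓ := by
  have hℓ i : ℓ i ≤ 4 := (hbound i).2
  obtain ⟨i, hi₁, hi₂⟩ := exists_partialSum_le_lt ℓ (x := 2) (by rw [partialSum_last, hsum]; simp)
  have hi₃ : partialSum ℓ i.succ ≤ 6 := by
    rw [partialSum_succ] at hi₂ ⊢
    have := hℓ i
    omega
  by_cases h : partialSum ℓ i.succ ≤ 4
  · exact pathChain_of_shortReturnsOnlyAt trailA_isEulerian trailA_shortReturnsOnlyAt ℓ hℓ hsum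
      (m := i.succ) (by omega) (by omega)
  · exact pathChain_of_shortReturnsOnlyAt trailB_isEulerian trailB_shortReturnsOnlyAt ℓ hℓ hsum
      (m := i.succ) (by omega) (by omega)

end Quartic
end
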